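/- Let X be a Banach sequence space over ℤ with basis (e_n), and let B_w be a bilateral weighted backward shift, B_w(x_n)_{n∈ℤ} = (w_{n+1} x_{n+1})_{n∈ℤ}, with nonzero weights w_n. If B_w is a bounded operator on X, then B_w is a bounded operator on X̂ (with the norm |||·|||), and its operator norm on X̂ equals its operator norm on (X, |||·|||). -/

import Mathlib

noncomputable def partialSum {X : Type*} [NormedAddCommGroup X] [NormedSpace ℝ X]
    (e : ℤ → X) (x : ℤ → ℝ) (mn : ℕ × ℕ) : X :=
  ∑ k ∈ Finset.Icc (-(mn.1 : ℤ)) (mn.2 : ℤ), x k • e k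

noncomputable def tnorm {X : Type*} [NormedAddCommGroup X] [NormedSpace ℝ X]
    (e : ℤ → X) (x : ℤ → ℝ) : ℝ :=
  ⨆ mn : ℕ × ℕ, ‖partialSum e x mn‖

def Xhat {X : Type*} [NormedAddCommGroup X] [NormedSpace ℝ X]
    (e : ℤ → X) : Set (ℤ → ℝ) :=
  {x | BddAbove (Set.range fun mn : ℕ × ℕ => ‖partialSum e x mn‖)}

/-- The bilateral weighted backward shift acting on scalar sequences over `ℤ`. -/
def wShift (w : ℤ → ℝ) (x : ℤ → ℝ) : ℤ → ℝ := fun n => w (n + 1) * x (n + 1)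

/-!
Restricting a sequence `x` to a window `[-m, n]` gives a finitely supported sequence, which
lies in `X` and has `|||·|||` at most that of `x`. Since `B_w` maps the restriction of `x` to
`[-m, n+1]` to the restriction of `B_w x` to `[-m-1, n]`, every partial sum of `B_w x` is a partial
sum of `B_w` applied to an element of `X`. Hence a constant bounding `B_w` for `|||·|||` on `X`
bounds it on `X̂`; the converse holds since `X ⊆ X̂`, so both sets of admissible constants
coincide. One such constant exists because `‖z‖ ≤ |||z||| ≤ K ‖z‖` on `X`, the upper bound by
Banach–Steinhaus for the partial-sum projections.
-/

open Filter Topology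

section Window

variable {X : Type*} [NormedAddCommGroup X] [NormedSpace ℝ X]

noncomputable def window (mn : ℕ × ℕ) : Finset ℤ := Finset.Icc (-(mn.1 : ℤ)) mn.2

@[simp]
lemma mem_window {mn : ℕ × ℕ} {k : ℤ} : k ∈ window mn ↔ -(mn.1 : ℤ) ≤ k ∧ k ≤ mn.2 :=
  Finset.mem_Icc

lemma window_inter (a b : ℕ × ℕ) : window a ∩ window b = window (a ⊓ b) := by
  ext k
  simp only [Finset.mem_inter, mem_window, Prod.fst_inf, Prod.snd_inf]
  omega

lemma window_sup_sdiff_subset (a b : ℕ × ℕ) : window (a ⊔ b) \ window a ⊆ window b := by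
  intro k
  simp only [Finset.mem_sdiff, mem_window, Prod.fst_sup, Prod.snd_sup]
  omega

lemma partialSum_eq_sum_window (e : ℤ → X) (x : ℤ → ℝ) (mn : ℕ × ℕ) :
    partialSum e x mn = ∑ k ∈ window mn, x k • e k :=
  rfl

lemma partialSum_indicator_window (e : ℤ → X) (x : ℤ → ℝ) (a b : ℕ × ℕ) :
    partialSum e ((window a : Set ℤ).indicator x) b = partialSum e x (a ⊓ b) := by
  simp only [partialSum_eq_sum_window, Set.indicator_apply, Finset.mem_coe, ite_smul, zero_smul,
    Finset.sum_ite_mem, Finset.inter_comm (window b), window_inter]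

lemma norm_partialSum_le_tnorm {e : ℤ → X} {x : ℤ → ℝ} (hx : x ∈ Xhat e) (mn : ℕ × ℕ) :
    ‖partialSum e x mn‖ ≤ tnorm e x :=
  le_ciSup hx mn

lemma indicator_window_mem_Xhat (e : ℤ → X) (x : ℤ → ℝ) (a : ℕ × ℕ) :
    (window a : Set ℤ).indicator x ∈ Xhat e := by
  refine ⟨∑ k ∈ window a, ‖x k • e k‖, Set.forall_mem_range.2 fun b => ?_⟩
  rw [partialSum_indicator_window, partialSum_eq_sum_window]
  refine (norm_sum_le _ _).trans <|
    Finset.sum_le_sum_of_subset_of_nonneg ?_ fun _ _ _ => norm_nonneg _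
  rw [← window_inter]
  exact Finset.inter_subset_left

lemma tnorm_indicator_window_le {e : ℤ → X} {x : ℤ → ℝ} (hx : x ∈ Xhat e) (a : ℕ × ℕ) :
    tnorm e ((window a : Set ℤ).indicator x) ≤ tnorm e x :=
  ciSup_le fun b => partialSum_indicator_window e x a b ▸ norm_partialSum_le_tnorm hx _

lemma norm_partialSum_sup_sub_le (e : ℤ → X) (x : ℤ → ℝ) (a b : ℕ × ℕ) :
    ‖partialSum e x (a ⊔ b) - partialSum e x a‖ ≤ ∑ k ∈ window b, ‖x k • e k‖ := by
  have hsub : window a ⊆ window (a ⊔ b) := by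
    intro k
    simp only [mem_window, Prod.fst_sup, Prod.snd_sup]
    omega
  rw [partialSum_eq_sum_window, partialSum_eq_sum_window, ← Finset.sum_sdiff hsub,
    add_sub_cancel_right]
  exact (norm_sum_le _ _).trans <| Finset.sum_le_sum_of_subset_of_nonneg
    (window_sup_sdiff_subset a b) fun _ _ _ => norm_nonneg _

-- Convergence bounds the partial sums only at indices `≥ N`; any other partial sum differs from
-- the one at `a ⊔ N` by terms indexed in the fixed window of `N`.
lemma mem_Xhat_of_tendsto {e : ℤ → X} {x : ℤ → ℝ} {s : X}
    (h : Tendsto (partialSum e x) atTop (𝓝 s)) : x ∈ Xhat e := by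
  obtain ⟨N, hN⟩ := eventually_atTop.1 (h.norm.eventually (eventually_le_nhds (lt_add_one ‖s‖)))
  refine ⟨‖s‖ + 1 + ∑ k ∈ window N, ‖x k • e k‖, ?_⟩
  rintro _ ⟨a, rfl⟩
  calc ‖partialSum e x a‖
      ≤ ‖partialSum e x (a ⊔ N)‖ + ‖partialSum e x a - partialSum e x (a ⊔ N)‖ :=
        norm_le_norm_add_norm_sub' _ _
    _ ≤ ‖s‖ + 1 + ∑ k ∈ window N, ‖x k • e k‖ := by
        rw [norm_sub_rev]
        exact add_le_add (hN _ le_sup_right) (norm_partialSum_sup_sub_le e x a N)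

lemma norm_le_tnorm_of_tendsto {e : ℤ → X} {x : ℤ → ℝ} {s : X} (hx : x ∈ Xhat e)
    (h : Tendsto (partialSum e x) atTop (𝓝 s)) : ‖s‖ ≤ tnorm e x :=
  le_of_tendsto' h.norm (norm_partialSum_le_tnorm hx)

end Window

section Shift

variable {X : Type*} [NormedAddCommGroup X] [NormedSpace ℝ X]

lemma wShift_indicator_window (w x : ℤ → ℝ) (m n : ℕ) :
    wShift w ((window (m, n + 1) : Set ℤ).indicator x) =
      (window (m + 1, n) : Set ℤ).indicator (wShift w x) := by
  ext k
  simp only [wShift, Set.indicator_apply, Finset.mem_coe, mem_window]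
  push_cast
  split_ifs <;> first | rfl | exact mul_zero _ | (exfalso; omega)

lemma norm_partialSum_wShift_le {e : ℤ → X} {w x : ℤ → ℝ} (hx : x ∈ Xhat e) {C : ℝ} (hC : 0 ≤ C)
    (hwindow : ∀ a, tnorm e (wShift w ((window a : Set ℤ).indicator x)) ≤
      C * tnorm e ((window a : Set ℤ).indicator x))
    (mn : ℕ × ℕ) : ‖partialSum e (wShift w x) mn‖ ≤ C * tnorm e x := by
  obtain ⟨m, n⟩ := mn
  have hrestrict : partialSum e (wShift w x) (m, n) =
      partialSum e (wShift w ((window (m, n + 1) : Set ℤ).indicator x)) (m, n) := by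
    rw [wShift_indicator_window, partialSum_indicator_window,
      inf_of_le_right (Prod.mk_le_mk.2 ⟨Nat.le_succ m, le_rfl⟩)]
  calc ‖partialSum e (wShift w x) (m, n)‖
      ≤ tnorm e (wShift w ((window (m, n + 1) : Set ℤ).indicator x)) := by
        rw [hrestrict, wShift_indicator_window]
        exact norm_partialSum_le_tnorm (indicator_window_mem_Xhat e _ _) _
    _ ≤ C * tnorm e ((window (m, n + 1) : Set ℤ).indicator x) := hwindow _
    _ ≤ C * tnorm e x := by gcongr; exact tnorm_indicator_window_le hx _

end Shift

section Coordinates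

variable {X : Type*} [NormedAddCommGroup X] [NormedSpace ℝ X]

lemma coe_partialSum (coe : X →ₗ[ℝ] (ℤ → ℝ)) (e : ℤ → X)
    (he : ∀ n k : ℤ, coe (e n) k = if k = n then (1 : ℝ) else 0) (x : ℤ → ℝ) (mn : ℕ × ℕ) :
    coe (partialSum e x mn) = (window mn : Set ℤ).indicator x := by
  ext k
  simp only [partialSum_eq_sum_window, map_sum, map_smul, Finset.sum_apply, Pi.smul_apply, he,
    smul_eq_mul, mul_ite, mul_one, mul_zero, Finset.sum_ite_eq, Set.indicator_apply,
    Finset.mem_coe]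

noncomputable def partialSumCLM (coe : X →ₗ[ℝ] (ℤ → ℝ))
    (hcont : ∀ k : ℤ, Continuous fun x : X => coe x k) (e : ℤ → X) (mn : ℕ × ℕ) : X →L[ℝ] X :=
  ∑ k ∈ window mn,
    (⟨LinearMap.proj k ∘ₗ coe, hcont k⟩ : X →L[ℝ] ℝ).smulRight (e k)

lemma partialSumCLM_apply (coe : X →ₗ[ℝ] (ℤ → ℝ))
    (hcont : ∀ k : ℤ, Continuous fun x : X => coe x k) (e : ℤ → X) (mn : ℕ × ℕ) (z : X) :
    partialSumCLM coe hcont e mn z = partialSum e (coe z) mn := by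
  simp only [partialSumCLM, sum_apply, ContinuousLinearMap.smulRight_apply,
    partialSum_eq_sum_window]
  rfl

lemma exists_tnorm_coe_le [CompleteSpace X] (coe : X →ₗ[ℝ] (ℤ → ℝ))
    (hcont : ∀ k : ℤ, Continuous fun x : X => coe x k) (e : ℤ → X)
    (hmem : ∀ z : X, coe z ∈ Xhat e) :
    ∃ K, 0 ≤ K ∧ ∀ z : X, tnorm e (coe z) ≤ K * ‖z‖ := by
  obtain ⟨K, hK⟩ := banach_steinhaus (g := partialSumCLM coe hcont e) fun z => by
    obtain ⟨C, hC⟩ := hmem z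
    exact ⟨C, fun mn => (partialSumCLM_apply coe hcont e mn z).symm ▸ hC ⟨mn, rfl⟩⟩
  refine ⟨max K 0, le_max_right _ _, fun z => ciSup_le fun mn => ?_⟩
  rw [← partialSumCLM_apply coe hcont e]
  exact (partialSumCLM coe hcont e mn).le_opNorm z |>.trans <|
    mul_le_mul_of_nonneg_right ((hK mn).trans (le_max_left _ _)) (norm_nonneg z)

end Coordinates

theorem wShift_bounded_on_Xhat_same_norm_general
    {X : Type*} [NormedAddCommGroup X] [NormedSpace ℝ X] [CompleteSpace X]
    (coe : X →ₗ[ℝ] (ℤ → ℝ))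
    (hcont : ∀ k : ℤ, Continuous fun x : X => coe x k)
    (e : ℤ → X) (he : ∀ n k : ℤ, coe (e n) k = if k = n then (1 : ℝ) else 0)
    (hbasis : ∀ x : X,
      Filter.Tendsto (fun mn : ℕ × ℕ => partialSum e (coe x) mn) Filter.atTop (nhds x))
    (w : ℤ → ℝ)
    (T : X →L[ℝ] X) (hT : ∀ z : X, coe (T z) = wShift w (coe z)) :
    (∀ x ∈ Xhat e, wShift w x ∈ Xhat e) ∧
    sInf {C : ℝ | 0 ≤ C ∧ ∀ x ∈ Xhat e, tnorm e (wShift w x) ≤ C * tnorm e x} =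
      sInf {C : ℝ | 0 ≤ C ∧ ∀ z : X, tnorm e (wShift w (coe z)) ≤ C * tnorm e (coe z)} := by
  have hmem : ∀ z, coe z ∈ Xhat e := fun z => mem_Xhat_of_tendsto (hbasis z)
  have htransfer : ∀ C, 0 ≤ C →
      (∀ z : X, tnorm e (wShift w (coe z)) ≤ C * tnorm e (coe z)) →
      ∀ x ∈ Xhat e, ∀ mn, ‖partialSum e (wShift w x) mn‖ ≤ C * tnorm e x :=
    fun C hC hCz x hx => norm_partialSum_wShift_le hx hC fun a => by
      simpa only [coe_partialSum coe e he] using hCz (partialSum e x a)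
  obtain ⟨K, hK0, hK⟩ := exists_tnorm_coe_le coe hcont e hmem
  have hTbound : ∀ z, tnorm e (wShift w (coe z)) ≤ K * ‖T‖ * tnorm e (coe z) := fun z =>
    calc tnorm e (wShift w (coe z)) = tnorm e (coe (T z)) := by rw [hT]
      _ ≤ K * ‖T z‖ := hK _
      _ ≤ K * (‖T‖ * tnorm e (coe z)) := by
        gcongr
        exact (T.le_opNorm z).trans <| by
          gcongr; exact norm_le_tnorm_of_tendsto (hmem z) (hbasis z)
      _ = K * ‖T‖ * tnorm e (coe z) := by ring
  refine ⟨fun x hx => ⟨_, Set.forall_mem_range.2 (htransfer _ (by positivity) hTbound x hx)⟩,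
    congrArg sInf (Set.ext fun C => ⟨fun ⟨hC, h⟩ => ⟨hC, fun z => h _ (hmem z)⟩,
      fun ⟨hC, h⟩ => ⟨hC, fun x hx => ciSup_le (htransfer C hC h x hx)⟩⟩)⟩

theorem wShift_bounded_on_Xhat_same_norm
    {X : Type*} [NormedAddCommGroup X] [NormedSpace ℝ X] [CompleteSpace X]
    (coe : X →ₗ[ℝ] (ℤ → ℝ)) (hinj : Function.Injective coe)
    (hcont : ∀ k : ℤ, Continuous fun x : X => coe x k)
    (e : ℤ → X) (he : ∀ n k : ℤ, coe (e n) k = if k = n then (1 : ℝ) else 0)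
    (hbasis : ∀ x : X,
      Filter.Tendsto (fun mn : ℕ × ℕ => partialSum e (coe x) mn) Filter.atTop (nhds x))
    (w : ℤ → ℝ) (hw : ∀ n, w n ≠ 0)
    (T : X →L[ℝ] X) (hT : ∀ z : X, coe (T z) = wShift w (coe z)) :
    (∀ x ∈ Xhat e, wShift w x ∈ Xhat e) ∧
    sInf {C : ℝ | 0 ≤ C ∧ ∀ x ∈ Xhat e, tnorm e (wShift w x) ≤ C * tnorm e x} =
      sInf {C : ℝ | 0 ≤ C ∧ ∀ z : X, tnorm e (wShift w (coe z)) ≤ C * tnorm e (coe z)} :=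
  wShift_bounded_on_Xhat_same_norm_general coe hcont e he hbasis w T hT
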